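/- For n ≥ 3, the monoid DPS_n is generated by the five partial isometries α₁, α₂, β₁, β₂, γ, where α₁ is the total map fixing 0, sending i to i+1 for 1 ≤ i ≤ n−2 and n−1 to 1; α₂ is the total map fixing 0 and every i with 3 ≤ i ≤ n−1 and swapping 1 and 2; β₁ is the partial identity on {0,1,...,n−2}; β₂ is the partial identity on {1,...,n−1}; and γ is the partial map with domain {0,1} sending 0 to 1 and 1 to 0. That is, the submonoid of DPS_n generated by {α₁, α₂, β₁, β₂, γ} equals DPS_n. -/

import Mathlib

/-!
A partial isometry `α` of the star either keeps the center `0` and the leaves apart, or, as soon as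
it moves one point across the center, it exchanges center and leaves on its whole domain (compare
distances to that point).

In the first case `α` is the partial identity on its domain followed by a permutation fixing `0`.
Such permutations are generated by the `(n-1)`-cycle `α₁` and the adjacent transposition `α₂` of
the leaves, and every partial identity is an intersection of partial identities on `{i}ᶜ`, which
are `β₂` for `i = 0` and conjugates of `β₁` by leaf permutations otherwise.

In the second case the image of `α` lies in `{0, j}` for some leaf `j`. With `g` the transposition
of the leaves `j` and `1`, `γγ` is the partial identity on `{0, 1} = g {0, j}`, so
`α = (α g γ) γ g⁻¹`, and `α g γ` is of the first kind.
-/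

namespace DPSPaper

instance instMonoidPFun {V : Type*} : Monoid (V →. V) where
  mul f g := g.comp f
  one := PFun.id V
  mul_assoc a b c := (PFun.comp_assoc c b a).symm
  one_mul := PFun.comp_id
  mul_one := PFun.id_comp

/-- The geodesic distance in the star graph `S_n` on vertices `{0,1,...,n-1}`. -/
def starDist (n : ℕ) (x y : Fin n) : ℕ :=
  if x = y then 0 else if (x : ℕ) = 0 ∨ (y : ℕ) = 0 then 1 else 2

/-- Injectivity of a partial map. -/
def PInj {n : ℕ} (α : Fin n →. Fin n) : Prop :=
  ∀ ⦃x y a : Fin n⦄, a ∈ α x → a ∈ α y → x = y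

/-- `α` is a partial isometry of the star graph `S_n`. -/
def IsStarPI {n : ℕ} (α : Fin n →. Fin n) : Prop :=
  PInj α ∧ ∀ ⦃x y u v : Fin n⦄, u ∈ α x → v ∈ α y → starDist n u v = starDist n x y

/-- The set of all partial isometries of `S_n`. -/
def DPSset (n : ℕ) : Set (Fin n →. Fin n) := { α | IsStarPI α }

/-- `α₁` : fixes 0, sends `i ↦ i+1` for `1 ≤ i ≤ n-2`, and `n-1 ↦ 1`. -/
def alphaOne (n : ℕ) (hn : 3 ≤ n) : Fin n →. Fin n :=
  fun x => Part.some <|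
    if (x : ℕ) = 0 then x
    else if h : (x : ℕ) = n - 1 then ⟨1, by omega⟩
    else ⟨(x : ℕ) + 1, by have := x.isLt; omega⟩

/-- `α₂` : fixes 0 and every `i ≥ 3`, swaps 1 and 2. -/
def alphaTwo (n : ℕ) (hn : 3 ≤ n) : Fin n →. Fin n :=
  fun x => Part.some <|
    if (x : ℕ) = 1 then ⟨2, by omega⟩
    else if (x : ℕ) = 2 then ⟨1, by omega⟩
    else x

/-- `β₁` : the partial identity on `{0,1,...,n-2}`. -/
def betaOne (n : ℕ) : Fin n →. Fin n :=
  fun x => if (x : ℕ) ≤ n - 2 then Part.some x else Part.none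

/-- `β₂` : the partial identity on `{1,...,n-1}`. -/
def betaTwo (n : ℕ) : Fin n →. Fin n :=
  fun x => if (x : ℕ) = 0 then Part.none else Part.some x

/-- `γ` : domain `{0,1}`, sending `0 ↦ 1` and `1 ↦ 0`. -/
def gammaMap (n : ℕ) (hn : 3 ≤ n) : Fin n →. Fin n :=
  fun x =>
    if (x : ℕ) = 0 then Part.some ⟨1, by omega⟩
    else if (x : ℕ) = 1 then Part.some ⟨0, by omega⟩
    else Part.none

open Equiv

section PartialMaps

variable {V : Type*}

theorem mem_mul_iff {f g : V →. V} {x a : V} : a ∈ (f * g) x ↔ ∃ b ∈ f x, a ∈ g b :=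
  Part.mem_bind_iff

theorem mem_one_iff {x a : V} : a ∈ (1 : V →. V) x ↔ a = x :=
  Part.mem_some_iff

def partialId (s : Set V) : V →. V :=
  PFun.res id s

theorem mem_partialId_iff {s : Set V} {x a : V} : a ∈ partialId s x ↔ x ∈ s ∧ a = x := by
  simp [partialId, PFun.mem_res, eq_comm]

theorem partialId_univ : partialId (Set.univ : Set V) = 1 :=
  PFun.ext fun _ _ => by simp [mem_partialId_iff, mem_one_iff]

theorem partialId_mul_partialId (s t : Set V) : partialId s * partialId t = partialId (s ∩ t) :=
  PFun.ext fun _ _ => by simp [mem_mul_iff, mem_partialId_iff, and_assoc]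

theorem mul_partialId_of_forall_mem {α : V →. V} {s : Set V} (h : ∀ x, ∀ a ∈ α x, a ∈ s) :
    α * partialId s = α :=
  PFun.ext fun x a => by
    simp only [mem_mul_iff, mem_partialId_iff]
    exact ⟨fun ⟨b, hb, _, hab⟩ => hab ▸ hb, fun ha => ⟨a, ha, h x a ha, rfl⟩⟩

def ofPerm (σ : Perm V) : V →. V :=
  PFun.lift σ

theorem mem_ofPerm_iff {σ : Perm V} {x a : V} : a ∈ ofPerm σ x ↔ a = σ x :=
  Part.mem_some_iff

theorem ofPerm_one : ofPerm (1 : Perm V) = 1 :=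
  PFun.ext fun _ _ => by simp [mem_ofPerm_iff, mem_one_iff]

theorem ofPerm_mul (σ τ : Perm V) : ofPerm (σ * τ) = ofPerm τ * ofPerm σ :=
  PFun.ext fun _ _ => by simp [mem_mul_iff, mem_ofPerm_iff]

theorem ofPerm_mul_partialId_mul_ofPerm_inv (σ : Perm V) (s : Set V) :
    ofPerm σ * partialId s * ofPerm σ⁻¹ = partialId (σ ⁻¹' s) :=
  PFun.ext fun _ _ => by
    simp [mem_mul_iff, mem_ofPerm_iff, mem_partialId_iff]

theorem partialId_dom_mul_ofPerm {α : V →. V} {σ : Perm V} (h : ∀ x, ∀ a ∈ α x, σ x = a) :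
    partialId α.Dom * ofPerm σ = α :=
  PFun.ext fun x a => by
    simp only [mem_mul_iff, mem_partialId_iff, mem_ofPerm_iff, PFun.mem_dom]
    constructor
    · rintro ⟨y, ⟨⟨b, hb⟩, rfl⟩, rfl⟩
      rwa [h y b hb]
    · exact fun ha => ⟨x, ⟨⟨a, ha⟩, rfl⟩, (h x a ha).symm⟩

theorem exists_perm_extending [Finite V] {α : V →. V}
    (hα : ∀ ⦃x y a⦄, a ∈ α x → a ∈ α y → x = y) : ∃ σ : Perm V, ∀ x, ∀ a ∈ α x, σ x = a := by
  classical
  let e : {x // (α x).Dom} ≃ {a // ∃ x, a ∈ α x} := Equiv.ofBijective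
    (fun x => ⟨(α x).get x.2, x, Part.get_mem x.2⟩)
    ⟨fun x y hxy => Subtype.ext <| hα (Part.get_mem x.2) <| by
      have h : (α x).get x.2 = (α y).get y.2 := Subtype.ext_iff.mp hxy
      exact h ▸ Part.get_mem y.2,
     fun ⟨a, x, ha⟩ => ⟨⟨x, Part.dom_iff_mem.mpr ⟨a, ha⟩⟩, Subtype.ext (Part.get_eq_of_mem ha _)⟩⟩
  refine ⟨e.extendSubtype, fun x a ha => ?_⟩
  rw [e.extendSubtype_apply_of_mem x (Part.dom_iff_mem.mpr ⟨a, ha⟩)]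
  exact Part.get_eq_of_mem ha _

theorem exists_perm_extending_fixing [Finite V] [DecidableEq V] (c : V) {α : V →. V}
    (hα : ∀ ⦃x y a⦄, a ∈ α x → a ∈ α y → x = y) (hc : ∀ x, ∀ a ∈ α x, a = c ↔ x = c) :
    ∃ σ : Perm V, σ c = c ∧ ∀ x, ∀ a ∈ α x, σ x = a := by
  let β : V →. V := fun x => if x = c then Part.some c else α x
  have hβ : ∀ ⦃x a⦄, a ∈ α x → a ∈ β x := fun x a ha => by
    by_cases hx : x = c
    · simp [β, hx, (hc x a ha).mpr hx]
    · simpa [β, hx] using ha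
  obtain ⟨σ, hσ⟩ := exists_perm_extending (α := β) fun x y a hx hy => by
    by_cases hxc : x = c <;> by_cases hyc : y = c <;> simp only [β, hxc, hyc, if_true, if_false,
      Part.mem_some_iff] at hx hy
    · exact hxc.trans hyc.symm
    · exact absurd ((hc y a hy).mp hx) hyc
    · exact absurd ((hc x a hx).mp hy) hxc
    · exact hα hx hy
  exact ⟨σ, hσ c c (by simp [β]), fun x a ha => hσ x a (hβ ha)⟩

end PartialMaps

section Star

variable {n : ℕ}

theorem isStarPI_one : IsStarPI (1 : Fin n →. Fin n) :=
  ⟨fun _ _ _ hx hy => (mem_one_iff.mp hx).symm.trans (mem_one_iff.mp hy),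
    fun _ _ _ _ hu hv => by rw [mem_one_iff.mp hu, mem_one_iff.mp hv]⟩

theorem IsStarPI.mul {f g : Fin n →. Fin n} (hf : IsStarPI f) (hg : IsStarPI g) :
    IsStarPI (f * g) := by
  refine ⟨fun x y a hx hy => ?_, fun x y u v hu hv => ?_⟩
  · obtain ⟨b, hb, hab⟩ := mem_mul_iff.mp hx
    obtain ⟨c, hc, hac⟩ := mem_mul_iff.mp hy
    exact hf.1 hb (hg.1 hab hac ▸ hc)
  · obtain ⟨b, hb, hub⟩ := mem_mul_iff.mp hu
    obtain ⟨c, hc, hvc⟩ := mem_mul_iff.mp hv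
    rw [hg.2 hub hvc, hf.2 hb hc]

def DPS (n : ℕ) : Submonoid (Fin n →. Fin n) where
  carrier := DPSset n
  one_mem' := isStarPI_one
  mul_mem' := IsStarPI.mul

theorem isStarPI_partialId (s : Set (Fin n)) : IsStarPI (partialId s) :=
  ⟨fun _ _ _ hx hy => (mem_partialId_iff.mp hx).2.symm.trans (mem_partialId_iff.mp hy).2,
    fun _ _ _ _ hu hv => by rw [(mem_partialId_iff.mp hu).2, (mem_partialId_iff.mp hv).2]⟩

variable [NeZero n]

theorem starDist_eq_one_iff {x y : Fin n} (hxy : x ≠ y) : starDist n x y = 1 ↔ x = 0 ∨ y = 0 := by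
  simp [starDist, hxy, or_iff_not_imp_left]

theorem isStarPI_ofPerm {σ : Perm (Fin n)} (hσ : σ 0 = 0) : IsStarPI (ofPerm σ) := by
  refine ⟨fun x y a hx hy => σ.injective ((mem_ofPerm_iff.mp hx).symm.trans (mem_ofPerm_iff.mp hy)),
    fun x y u v hu hv => ?_⟩
  rw [mem_ofPerm_iff.mp hu, mem_ofPerm_iff.mp hv]
  simp [starDist, σ.injective.eq_iff' hσ]

theorem IsStarPI.swaps_center {α : Fin n →. Fin n} (hα : IsStarPI α) {x₀ a₀ : Fin n}
    (h₀ : a₀ ∈ α x₀) (hcross : a₀ = 0 ↔ x₀ ≠ 0) : ∀ x, ∀ a ∈ α x, a = 0 ↔ x ≠ 0 := by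
  intro x a ha
  by_cases hx : x = x₀
  · subst hx
    rwa [Part.mem_unique ha h₀]
  have ha₀ : a ≠ a₀ := fun h => hx (hα.1 ha (h ▸ h₀))
  have hd : (a = 0 ∨ a₀ = 0) ↔ (x = 0 ∨ x₀ = 0) := by
    rw [← starDist_eq_one_iff ha₀, ← starDist_eq_one_iff hx, hα.2 ha h₀]
  have : ¬(a = 0 ∧ a₀ = 0) := fun h => ha₀ (h.1.trans h.2.symm)
  have : ¬(x = 0 ∧ x₀ = 0) := fun h => hx (h.1.trans h.2.symm)
  tauto

end Star

section LeafPerm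

variable {k : ℕ}

def leafPerm (k : ℕ) : Perm (Fin k) →* Perm (Fin (k + 1)) :=
  Perm.extendDomainHom (finSuccAboveEquiv 0)

theorem leafPerm_apply_zero (π : Perm (Fin k)) : leafPerm k π 0 = 0 :=
  Perm.extendDomain_apply_not_subtype _ _ (by simp)

theorem leafPerm_apply_succ (π : Perm (Fin k)) (i : Fin k) : leafPerm k π i.succ = (π i).succ := by
  simpa [leafPerm, finSuccAboveEquiv_apply] using
    Perm.extendDomain_apply_image π (finSuccAboveEquiv 0) i

theorem exists_leafPerm_eq {σ : Perm (Fin (k + 1))} (hσ : σ 0 = 0) : ∃ π, leafPerm k π = σ := by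
  refine ⟨(finSuccAboveEquiv 0).symm.permCongr (σ.subtypePerm fun x => ?_), ?_⟩
  · exact (σ.injective.eq_iff' hσ).not
  · ext x
    by_cases hx : x = 0
    · simp [hx, leafPerm_apply_zero, hσ]
    · rw [leafPerm, Perm.extendDomainHom_apply,
        Perm.extendDomain_apply_subtype _ _ (p := (· ≠ 0)) hx]
      simp [Equiv.permCongr_apply]

theorem closure_finRotate_swap :
    Submonoid.closure {finRotate (k + 2), swap 0 1} = ⊤ := by
  have h := Perm.closure_cycle_adjacent_swap (isCycle_finRotate (n := k)) support_finRotate 0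
  rw [finRotate_apply, zero_add] at h
  rw [← Subgroup.closure_toSubmonoid_of_finite, h, Subgroup.top_toSubmonoid]

end LeafPerm

section Generators

variable {m : ℕ} (hn : 3 ≤ m + 3)

theorem alphaOne_eq : alphaOne (m + 3) hn = ofPerm (leafPerm _ (finRotate (m + 2))) := by
  funext x
  refine congrArg Part.some (Fin.cases ?_ (fun i => ?_) x)
  · simp [leafPerm_apply_zero]
  · rw [leafPerm_apply_succ]
    have h := coe_finRotate i
    simp only [Fin.ext_iff, Fin.val_last] at h
    simp only [Fin.ext_iff, Fin.val_succ]
    split_ifs at h ⊢ <;> simp_all; omega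

theorem alphaTwo_eq : alphaTwo (m + 3) hn = ofPerm (leafPerm _ (swap 0 1)) := by
  funext x
  refine congrArg Part.some (Fin.cases ?_ (fun i => ?_) x)
  · simp [leafPerm_apply_zero]
  · rw [leafPerm_apply_succ, swap_apply_def]
    simp only [Fin.ext_iff, Fin.val_succ]
    split_ifs <;> simp_all

theorem betaOne_eq {k : ℕ} : betaOne (k + 2) = partialId {Fin.last (k + 1)}ᶜ :=
  PFun.ext fun x a => by
    rw [mem_partialId_iff, Set.mem_compl_singleton_iff, Fin.ne_iff_vne, Fin.val_last, betaOne]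
    split_ifs <;> simp [Part.mem_some_iff] <;> omega

theorem betaTwo_eq {n : ℕ} [NeZero n] : betaTwo n = partialId {0}ᶜ :=
  PFun.ext fun x a => by
    rw [mem_partialId_iff, Set.mem_compl_singleton_iff]
    by_cases hx : x = 0 <;> simp [betaTwo, hx]

theorem mem_gammaMap_iff {x a : Fin (m + 3)} :
    a ∈ gammaMap (m + 3) hn x ↔ x = 0 ∧ a = 1 ∨ x = 1 ∧ a = 0 := by
  simp only [gammaMap, Fin.ext_iff, Fin.val_zero, Fin.val_one]
  split_ifs <;> simp only [Part.mem_some_iff, Fin.ext_iff, Part.notMem_none, false_iff] <;> omega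

theorem gammaMap_mul_gammaMap : gammaMap (m + 3) hn * gammaMap (m + 3) hn = partialId {0, 1} :=
  PFun.ext fun x a => by
    simp only [mem_mul_iff, mem_gammaMap_iff, mem_partialId_iff, Set.mem_insert_iff,
      Set.mem_singleton_iff]
    constructor
    · rintro ⟨b, ⟨rfl, rfl⟩ | ⟨rfl, rfl⟩, ⟨h, rfl⟩ | ⟨h, rfl⟩⟩ <;> simp_all
    · rintro ⟨rfl | rfl, rfl⟩
      exacts [⟨1, by simp⟩, ⟨0, by simp⟩]

theorem isStarPI_gammaMap : IsStarPI (gammaMap (m + 3) hn) := by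
  refine ⟨fun x y a hx hy => ?_, fun x y u v hu hv => ?_⟩
  · rw [mem_gammaMap_iff] at hx hy
    rcases hx with ⟨rfl, rfl⟩ | ⟨rfl, rfl⟩ <;> rcases hy with ⟨rfl, h⟩ | ⟨rfl, h⟩ <;> simp_all
  · rw [mem_gammaMap_iff] at hu hv
    rcases hu with ⟨rfl, rfl⟩ | ⟨rfl, rfl⟩ <;> rcases hv with ⟨rfl, rfl⟩ | ⟨rfl, rfl⟩ <;>
      simp [starDist]

end Generators

def starGenerators (n : ℕ) (hn : 3 ≤ n) : Set (Fin n →. Fin n) :=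
  {alphaOne n hn, alphaTwo n hn, betaOne n, betaTwo n, gammaMap n hn}

section Closure

variable {m : ℕ} (hn : 3 ≤ m + 3)

theorem closure_starGenerators_le_DPS :
    Submonoid.closure (starGenerators (m + 3) hn) ≤ DPS (m + 3) := by
  rw [Submonoid.closure_le]
  rintro f (rfl | rfl | rfl | rfl | rfl)
  · exact alphaOne_eq hn ▸ isStarPI_ofPerm (leafPerm_apply_zero _)
  · exact alphaTwo_eq hn ▸ isStarPI_ofPerm (leafPerm_apply_zero _)
  · exact betaOne_eq ▸ isStarPI_partialId _
  · exact (betaTwo_eq (n := m + 3)) ▸ isStarPI_partialId _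
  · exact isStarPI_gammaMap hn

theorem ofPerm_leafPerm_mem_closure (π : Perm (Fin (m + 2))) :
    ofPerm (leafPerm _ π) ∈ Submonoid.closure (starGenerators (m + 3) hn) := by
  have hπ : π ∈ Submonoid.closure {finRotate (m + 2), swap 0 1} := by
    rw [closure_finRotate_swap]; trivial
  induction hπ using Submonoid.closure_induction with
  | mem π hπ =>
    rcases hπ with rfl | rfl
    · exact Submonoid.subset_closure (by simp [starGenerators, ← alphaOne_eq hn])
    · exact Submonoid.subset_closure (by simp [starGenerators, ← alphaTwo_eq hn])
  | one => rw [map_one, ofPerm_one]; exact one_mem _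
  | mul π τ _ _ hπ hτ => rw [map_mul, ofPerm_mul]; exact mul_mem hτ hπ

theorem ofPerm_mem_closure {σ : Perm (Fin (m + 3))} (hσ : σ 0 = 0) :
    ofPerm σ ∈ Submonoid.closure (starGenerators (m + 3) hn) := by
  obtain ⟨π, rfl⟩ := exists_leafPerm_eq hσ
  exact ofPerm_leafPerm_mem_closure hn π

theorem partialId_compl_singleton_mem_closure (i : Fin (m + 3)) :
    partialId {i}ᶜ ∈ Submonoid.closure (starGenerators (m + 3) hn) := by
  by_cases hi : i = 0
  · rw [hi, ← betaTwo_eq]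
    exact Submonoid.subset_closure (by simp [starGenerators])
  set σ := swap i (Fin.last (m + 2))
  have hσ : σ 0 = 0 := swap_apply_of_ne_of_ne (Ne.symm hi) (Fin.last_pos.ne)
  have hβ : partialId {Fin.last (m + 2)}ᶜ ∈ Submonoid.closure (starGenerators (m + 3) hn) :=
    betaOne_eq ▸ Submonoid.subset_closure (by simp [starGenerators])
  have hpre : σ ⁻¹' {Fin.last (m + 2)}ᶜ = {i}ᶜ := by
    ext x; simp [σ, swap_apply_eq_iff]
  rw [← hpre, ← ofPerm_mul_partialId_mul_ofPerm_inv]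
  exact mul_mem (mul_mem (ofPerm_mem_closure hn hσ) hβ)
    (ofPerm_mem_closure hn (by rw [Perm.inv_eq_iff_eq, hσ]))

theorem partialId_mem_closure (s : Set (Fin (m + 3))) :
    partialId s ∈ Submonoid.closure (starGenerators (m + 3) hn) := by
  suffices h : ∀ t : Finset (Fin (m + 3)),
      partialId (↑t)ᶜ ∈ Submonoid.closure (starGenerators (m + 3) hn) by
    simpa using h sᶜ.toFinite.toFinset
  intro t
  induction t using Finset.induction_on with
  | empty => rw [Finset.coe_empty, Set.compl_empty, partialId_univ]; exact one_mem _
  | insert i t _ ih =>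
    have h : (↑(insert i t) : Set (Fin (m + 3)))ᶜ = {i}ᶜ ∩ (↑t)ᶜ := by
      ext; simp [not_or]
    rw [h, ← partialId_mul_partialId]
    exact mul_mem (partialId_compl_singleton_mem_closure hn i) ih

theorem mem_closure_of_fixes_center {α : Fin (m + 3) →. Fin (m + 3)} (hα : IsStarPI α)
    (hfix : ∀ x, ∀ a ∈ α x, a = 0 ↔ x = 0) :
    α ∈ Submonoid.closure (starGenerators (m + 3) hn) := by
  obtain ⟨σ, hσ0, hσ⟩ := exists_perm_extending_fixing 0 hα.1 hfix
  rw [← partialId_dom_mul_ofPerm hσ]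
  exact mul_mem (partialId_mem_closure hn _) (ofPerm_mem_closure hn hσ0)

theorem exists_forall_mem_pair_of_swaps_center {α : Fin (m + 3) →. Fin (m + 3)}
    (hswap : ∀ x, ∀ a ∈ α x, a = 0 ↔ x ≠ 0) :
    ∃ j ≠ 0, ∀ x, ∀ a ∈ α x, a ∈ ({0, j} : Set (Fin (m + 3))) := by
  by_cases h : (α 0).Dom
  · refine ⟨(α 0).get h, (hswap 0 _ (Part.get_mem h)).not.mpr (by simp), fun x a ha => ?_⟩
    by_cases hx : x = 0
    · subst hx; exact Or.inr (Part.get_eq_of_mem ha h).symm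
    · exact Or.inl ((hswap x a ha).mpr hx)
  · refine ⟨1, by simp, fun x a ha => Or.inl ((hswap x a ha).mpr ?_)⟩
    rintro rfl
    exact h (Part.dom_iff_mem.mpr ⟨a, ha⟩)

theorem mem_closure_of_swaps_center {α : Fin (m + 3) →. Fin (m + 3)} (hα : IsStarPI α)
    (hswap : ∀ x, ∀ a ∈ α x, a = 0 ↔ x ≠ 0) :
    α ∈ Submonoid.closure (starGenerators (m + 3) hn) := by
  obtain ⟨j, hj0, hj⟩ := exists_forall_mem_pair_of_swaps_center hswap
  set g := swap j 1
  have hg0 : g 0 = 0 := swap_apply_of_ne_of_ne hj0.symm (by simp)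
  set γ := gammaMap (m + 3) hn
  have hγ : γ ∈ Submonoid.closure (starGenerators (m + 3) hn) :=
    Submonoid.subset_closure (by simp [γ, starGenerators])
  -- `α g γ` sends `0` to `0` and the leaf of its domain to `1`
  have hβ : α * ofPerm g * γ ∈ Submonoid.closure (starGenerators (m + 3) hn) := by
    refine mem_closure_of_fixes_center hn ?_ fun x a ha => ?_
    · exact (hα.mul (isStarPI_ofPerm hg0)).mul (isStarPI_gammaMap hn)
    · obtain ⟨c, hc, hac⟩ := mem_mul_iff.mp ha
      obtain ⟨b, hb, hbc⟩ := mem_mul_iff.mp hc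
      rw [mem_ofPerm_iff] at hbc
      subst hbc
      have hb0 := hswap x b hb
      have hgb0 : g b = 0 ↔ b = 0 := g.injective.eq_iff' hg0
      have h10 : (1 : Fin (m + 3)) ≠ 0 := by simp
      rw [mem_gammaMap_iff] at hac
      rcases hac with ⟨h, rfl⟩ | ⟨h, rfl⟩
      · tauto
      · have : g b ≠ 0 := h ▸ h10
        tauto
  have hpre : g ⁻¹' {0, 1} = {0, j} := by
    ext x; simp [g, swap_apply_eq_iff, hg0]
  have hdecomp : α = α * ofPerm g * γ * γ * ofPerm g⁻¹ := calc
    α = α * partialId {0, j} := (mul_partialId_of_forall_mem hj).symm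
    _ = α * (ofPerm g * (γ * γ) * ofPerm g⁻¹) := by
      rw [gammaMap_mul_gammaMap, ofPerm_mul_partialId_mul_ofPerm_inv, hpre]
    _ = α * ofPerm g * γ * γ * ofPerm g⁻¹ := by simp only [mul_assoc]
  rw [hdecomp]
  exact mul_mem (mul_mem hβ hγ) (ofPerm_mem_closure hn (by rw [Perm.inv_eq_iff_eq, hg0]))

theorem mem_closure_of_isStarPI {α : Fin (m + 3) →. Fin (m + 3)} (hα : IsStarPI α) :
    α ∈ Submonoid.closure (starGenerators (m + 3) hn) := by
  by_cases hfix : ∀ x, ∀ a ∈ α x, a = 0 ↔ x = 0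
  · exact mem_closure_of_fixes_center hn hα hfix
  · push Not at hfix
    obtain ⟨x₀, a₀, h₀, hcross⟩ := hfix
    exact mem_closure_of_swaps_center hn hα (hα.swaps_center h₀ (by tauto))

end Closure

theorem statement8 (n : ℕ) (hn : 3 ≤ n) :
    (↑(Submonoid.closure
        {alphaOne n hn, alphaTwo n hn, betaOne n, betaTwo n, gammaMap n hn}) :
      Set (Fin n →. Fin n)) = DPSset n := by
  obtain ⟨m, rfl⟩ : ∃ m, n = m + 3 := ⟨n - 3, by omega⟩
  exact Set.Subset.antisymm (closure_starGenerators_le_DPS hn)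
    fun α hα => mem_closure_of_isStarPI hn hα

end DPSPaper
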